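/- For s ≤ p < q ≤ t, there is no nonzero morphism of persistence modules from the half-open interval module I_{[p,q)} to the closed interval module I_{[s,t]} that is injective; more strongly, the closed interval module I_{[s,t]} (with s < t) contains no nonzero compact submodule, hence fails to be locally compact. -/

import Mathlib

open CategoryTheory CategoryTheory.Limits NNReal
open scoped ENNReal

abbrev PMod := ℝ≥0 ⥤ ModuleCat ℚ

/-- A sub-persistence-module: a family of `ℚ`-subspaces preserved by the structure maps. -/
structure Subpersistence (V : PMod) where
  U : ∀ r : ℝ≥0, Submodule ℚ (V.obj r)
  maps_mem : ∀ a b : ℝ≥0, ∀ h : a ≤ b, ∀ x ∈ U a, (V.map (homOfLE h)) x ∈ U b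

/-- Tameness of a sub-persistence-module: away from finitely many thresholds, the
structure maps restrict to bijections between the subspaces. -/
def SubTame {V : PMod} (W : Subpersistence V) : Prop :=
  ∃ ts : Finset ℝ≥0, ∀ a b : ℝ≥0, ∀ h : a ≤ b, (¬ ∃ c ∈ ts, a < c ∧ c ≤ b) →
    Set.BijOn (V.map (homOfLE h)) (W.U a : Set (V.obj a)) (W.U b : Set (V.obj b))

/-- Finite type for a sub-persistence-module: each subspace is finite dimensional. -/
def SubFiniteType {V : PMod} (W : Subpersistence V) : Prop :=
  ∀ r : ℝ≥0, FiniteDimensional ℚ ↥(W.U r)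

/-- A compact (= tame and finite type, equivalently finitely interval-decomposable)
sub-persistence-module. -/
def IsCompactSub {V : PMod} (W : Subpersistence V) : Prop :=
  SubTame W ∧ SubFiniteType W

/-- `V` is locally compact if every element admits a compact neighbourhood. -/
def LocallyCompact (V : PMod) : Prop :=
  ∀ (r : ℝ≥0) (v : V.obj r), ∃ W : Subpersistence V, v ∈ W.U r ∧ IsCompactSub W

/-- The half-open interval module `I_{[s,t)}` (with `t` possibly infinite),
characterized up to isomorphism. -/
def IsInterval (V : PMod) (s : ℝ≥0∞) (t : ℝ≥0∞) : Prop :=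
  (∀ r : ℝ≥0, s ≤ (r : ℝ≥0∞) → (r : ℝ≥0∞) < t → Module.finrank ℚ (V.obj r) = 1) ∧
  (∀ r : ℝ≥0, ¬ (s ≤ (r : ℝ≥0∞) ∧ (r : ℝ≥0∞) < t) → Subsingleton (V.obj r)) ∧
  (∀ a b : ℝ≥0, ∀ h : a ≤ b, s ≤ (a : ℝ≥0∞) → (b : ℝ≥0∞) < t →
    IsIso (V.map (homOfLE h)))

/-- The closed interval module `I_{[s,t]}`, characterized up to isomorphism. -/
def IsClosedInterval (V : PMod) (s t : ℝ≥0) : Prop :=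
  (∀ r : ℝ≥0, s ≤ r → r ≤ t → Module.finrank ℚ (V.obj r) = 1) ∧
  (∀ r : ℝ≥0, ¬ (s ≤ r ∧ r ≤ t) → Subsingleton (V.obj r)) ∧
  (∀ a b : ℝ≥0, ∀ h : a ≤ b, s ≤ a → b ≤ t → IsIso (V.map (homOfLE h)))

/-!
Every tame submodule of `I_{[s,t]}` is zero: just beyond `t` the module vanishes, and a
tame submodule maps bijectively from `t` to some `b > t` below its next threshold, so it is zero
at `t`; the structure maps of `I_{[s,t]}` into time `t` are injective, so it is zero everywhere.
A morphism `η : I_{[p,q)} → I_{[s,t]}` with `s ≤ p`, `q ≤ t` vanishes for a similar reason: by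
naturality, `η_r` followed by the injective map `C_r → C_q` factors through `P_q = 0`.
-/

open CategoryTheory CategoryTheory.Limits NNReal Filter Topology

theorem Finset.exists_gt_forall_notMem_Ioc {α : Type*} [LinearOrder α] [TopologicalSpace α]
    [OrderTopology α] [DenselyOrdered α] [NoMaxOrder α] (ts : Finset α) (t : α) :
    ∃ b, t < b ∧ ∀ c ∈ ts, c ∉ Set.Ioc t b := by
  have hbelow : ∀ c ∈ ts, ∀ᶠ b in 𝓝[>] t, t < c → b < c := fun c _ => by
    by_cases htc : t < c
    · filter_upwards [Ioo_mem_nhdsGT htc] with b hb using fun _ => hb.2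
    · exact Eventually.of_forall fun _ h => absurd h htc
  obtain ⟨b, htb, hb⟩ :=
    (eventually_mem_nhdsWithin.and ((eventually_all_finset ts).2 hbelow)).exists
  exact ⟨b, htb, fun c hc hcb => (hb c hc hcb.1).not_ge hcb.2⟩

namespace Subpersistence

variable {V : PMod} (W : Subpersistence V)

theorem U_eq_bot_of_subTame (hW : SubTame W) {t : ℝ≥0}
    (hV : ∀ b, t < b → Subsingleton (V.obj b)) : W.U t = ⊥ := by
  obtain ⟨ts, hts⟩ := hW
  obtain ⟨b, htb, hb⟩ := ts.exists_gt_forall_notMem_Ioc t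
  have := hV b htb
  refine (Submodule.eq_bot_iff _).2 fun x hx => ?_
  exact (hts t b htb.le fun ⟨c, hc, hcb⟩ => hb c hc hcb).injOn hx (W.U t).zero_mem
    (Subsingleton.elim _ _)

theorem U_eq_bot_of_map_injective {a b : ℝ≥0} (h : a ≤ b)
    (hinj : Function.Injective (V.map (homOfLE h))) (hb : W.U b = ⊥) : W.U a = ⊥ := by
  refine (Submodule.eq_bot_iff _).2 fun x hx => ?_
  have hmap := W.maps_mem a b h x hx
  rw [hb, Submodule.mem_bot] at hmap
  exact (hinj.eq_iff' (map_zero _)).1 hmap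

end Subpersistence

namespace IsClosedInterval

variable {C : PMod} {s t : ℝ≥0}

theorem map_injective (hC : IsClosedInterval C s t) {a b : ℝ≥0} (h : a ≤ b) (hsa : s ≤ a)
    (hbt : b ≤ t) :
    Function.Injective (C.map (homOfLE h)) :=
  have := hC.2.2 a b h hsa hbt
  (ModuleCat.mono_iff_injective _).1 inferInstance

theorem U_eq_bot_of_subTame (hC : IsClosedInterval C s t) {W : Subpersistence C} (hW : SubTame W)
    (r : ℝ≥0) : W.U r = ⊥ := by
  by_cases hr : s ≤ r ∧ r ≤ t
  · refine W.U_eq_bot_of_map_injective hr.2 (hC.map_injective hr.2 hr.1 le_rfl) ?_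
    exact W.U_eq_bot_of_subTame hW fun b htb => hC.2.1 b fun hb => htb.not_ge hb.2
  · have := hC.2.1 r hr
    exact Submodule.eq_bot_of_subsingleton

theorem hom_eq_zero_of_isInterval (hC : IsClosedInterval C s t) {P : PMod} {p q : ℝ≥0}
    (hP : IsInterval P p q) (hsp : s ≤ p) (hqt : q ≤ t) (η : P ⟶ C) : η = 0 := by
  ext r v
  by_cases hr : (p : ℝ≥0∞) ≤ r ∧ (r : ℝ≥0∞) < q
  · have hrq : r ≤ q := (ENNReal.coe_lt_coe.1 hr.2).le
    have := hP.2.1 q fun h => h.2.false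
    refine hC.map_injective hrq (hsp.trans (ENNReal.coe_le_coe.1 hr.1)) hqt ?_
    have hnat := ConcreteCategory.congr_hom (η.naturality (homOfLE hrq)) v
    simp only [ConcreteCategory.comp_apply] at hnat
    simp [← hnat, Subsingleton.elim ((P.map (homOfLE hrq)) v) 0]
  · have := hP.2.1 r hr
    simp [Subsingleton.elim v 0]

end IsClosedInterval

/-- for `s ≤ p < q ≤ t` there is no nonzero pointwise-injective morphism
`I_{[p,q)} → I_{[s,t]}`; more strongly, the closed interval module `I_{[s,t]}` (with
`s < t`) contains no nonzero compact submodule, hence fails to be locally compact. -/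
theorem stmt7 (s t : ℝ≥0) (hst : s < t) (C : PMod) (hC : IsClosedInterval C s t) :
    (∀ p q : ℝ≥0, s ≤ p → p < q → q ≤ t → ∀ P : PMod,
      IsInterval P (p : ℝ≥0∞) (q : ℝ≥0∞) →
      ¬ ∃ η : P ⟶ C, (∀ r : ℝ≥0, Function.Injective (η.app r)) ∧ η ≠ 0) ∧
    (∀ W : Subpersistence C, IsCompactSub W → ∀ r : ℝ≥0, W.U r = ⊥) ∧
    ¬ LocallyCompact C := by
  have hcompact (W : Subpersistence C) (hW : IsCompactSub W) := hC.U_eq_bot_of_subTame hW.1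
  refine ⟨fun p q hsp _ hqt P hP ⟨η, _, hη⟩ => hη (hC.hom_eq_zero_of_isInterval hP hsp hqt η),
    hcompact, fun hLC => ?_⟩
  have := Module.nontrivial_of_finrank_eq_succ (hC.1 s le_rfl hst.le)
  obtain ⟨v, hv⟩ := exists_ne (0 : C.obj s)
  obtain ⟨W, hvW, hWc⟩ := hLC s v
  rw [hcompact W hWc s, Submodule.mem_bot] at hvW
  exact hv hvW
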